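/- Let Δ ≥ 2. The epidemic region of the infinite Δ-regular tree is exactly Ω_{T_Δ} = {(q, r) : q, r > 0, r ≥ ((Δ−1)/Δ)q, q ≤ 1/Δ} ∪ {(q, r) : q, r > 0, 2q + Δr ≤ 1}. -/

import Mathlib

namespace Contagion

open scoped BigOperators

/-- The three strategies in the contagion game. -/
inductive Strat
  | A | B | AB
deriving DecidableEq

/-- Pairwise payoff to a player using the first strategy against a neighbor
using the second strategy, in the contagion game with parameters `q, r`. -/
noncomputable def pairPayoff (q r : ℝ) : Strat → Strat → ℝ
  | .A, .A => 1 - q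
  | .A, .B => 0
  | .A, .AB => 1 - q
  | .B, .A => 0
  | .B, .B => q
  | .B, .AB => q
  | .AB, .A => 1 - q - r
  | .AB, .B => q - r
  | .AB, .AB => max q (1 - q) - r

variable {V : Type*}

/-- Total payoff to vertex `v` for playing strategy `s` against profile `σ`. -/
noncomputable def totalPayoff (G : SimpleGraph V) (q r : ℝ) (σ : V → Strat)
    (v : V) (s : Strat) : ℝ :=
  ∑ᶠ u ∈ G.neighborSet v, pairPayoff q r s (σ u)

/-- `s` is a best response of vertex `v` to the profile `σ`. -/
def IsBestResponse (G : SimpleGraph V) (q r : ℝ) (σ : V → Strat) (v : V) (s : Strat) : Prop :=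
  ∀ s' : Strat, totalPayoff G q r σ v s' ≤ totalPayoff G q r σ v s

/-- Strategy `A` becomes epidemic in the contagion game `(G, q, r)`:
there are a finite initial set `S₀` (playing `A`, everybody else playing `B`) and a
sequence `α` of vertices in which every vertex appears at least once, such that updating
at step `n` the vertex `α n` to a best response makes every vertex eventually adopt `A`. -/
def Epidemic (G : SimpleGraph V) (q r : ℝ) : Prop :=
  ∃ (S₀ : Set V) (α : ℕ → V) (σ : ℕ → V → Strat),
    S₀.Finite ∧
    Function.Surjective α ∧
    (∀ v ∈ S₀, σ 0 v = Strat.A) ∧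
    (∀ v ∉ S₀, σ 0 v = Strat.B) ∧
    (∀ n, IsBestResponse G q r (σ n) (α n) (σ (n + 1) (α n))) ∧
    (∀ n v, v ≠ α n → σ (n + 1) v = σ n v) ∧
    (∀ v, ∃ n, σ n v = Strat.A)

/-- The epidemic region `Ω_G ⊆ ℝ²` of `G`. -/
def epidemicRegion (G : SimpleGraph V) : Set (ℝ × ℝ) :=
  {p | 0 < p.1 ∧ p.1 < 1 ∧ 0 < p.2 ∧ Epidemic G p.1 p.2}

/-- `G` is `Δ`-regular: every vertex has exactly `Δ` neighbors. -/
def IsRegular (G : SimpleGraph V) (Δ : ℕ) : Prop :=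
  ∀ v, (G.neighborSet v).ncard = Δ

/-- The number of neighbors of `v` lying in the set `S`. -/
noncomputable def degIn (G : SimpleGraph V) (v : V) (S : Set V) : ℕ :=
  (G.neighborSet v ∩ S).ncard

/-- `RT Δ`: the infinite rooted tree in which the root (the empty list) has `Δ - 1`
children and every other vertex also has `Δ - 1` children (hence degree `Δ`). -/
def RT (Δ : ℕ) : SimpleGraph (List (Fin (Δ - 1))) :=
  SimpleGraph.fromRel (fun l l' => ∃ a : Fin (Δ - 1), l' = a :: l)

/-- `G` contains a subgraph isomorphic to `RT Δ`. -/
def HasRTCopy (Δ : ℕ) (G : SimpleGraph V) : Prop :=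
  ∃ f : List (Fin (Δ - 1)) → V,
    Function.Injective f ∧ ∀ x y, (RT Δ).Adj x y → G.Adj (f x) (f y)

/-- The thick half line `HL_Δ` (for even `Δ`), columns indexed by `ℕ` starting with the
first column `0`; `(k, i)` and `(l, j)` are adjacent exactly when `|k - l| = 1`. -/
def HL (Δ : ℕ) : SimpleGraph (ℕ × Fin (Δ / 2)) :=
  SimpleGraph.fromRel (fun x y => y.1 = x.1 + 1)

/-- The epidemic region of the infinite `Δ`-regular tree:
`{(q,r) : q,r > 0, r ≥ ((Δ-1)/Δ)q, q ≤ 1/Δ} ∪ {(q,r) : q,r > 0, 2q + Δr ≤ 1}`. -/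
def treeRegion (Δ : ℕ) : Set (ℝ × ℝ) :=
  {p | 0 < p.1 ∧ 0 < p.2 ∧ ((Δ : ℝ) - 1) / Δ * p.1 ≤ p.2 ∧ p.1 ≤ 1 / Δ} ∪
  {p | 0 < p.1 ∧ 0 < p.2 ∧ 2 * p.1 + Δ * p.2 ≤ 1}

/-- The epidemic region of the thick line `L_Δ`:
`{(q,r) : 0 < q ≤ 1/2, r ≥ q/2} ∪ {(q,r) : q,r > 0, r ≤ q/2, 2q + 2r ≤ 1}`. -/
def thickLineRegion : Set (ℝ × ℝ) :=
  {p | 0 < p.1 ∧ p.1 ≤ 1 / 2 ∧ p.1 / 2 ≤ p.2} ∪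
  {p | 0 < p.1 ∧ 0 < p.2 ∧ p.2 ≤ p.1 / 2 ∧ 2 * p.1 + 2 * p.2 ≤ 1}

/-- `(SAB, SB)` is a blocking structure for the contagion game `(G, q, r)`
on a `Δ`-regular graph `G`. -/
def IsBlockingStructure (G : SimpleGraph V) (Δ : ℕ) (q r : ℝ) (SAB SB : Set V) : Prop :=
  Disjoint SAB SB ∧ (SAB.Nonempty ∨ SB.Nonempty) ∧
  (∀ v ∈ SAB, r / q * Δ < (degIn G v SB : ℝ)) ∧
  ∀ v ∈ SB,
    (1 - q - r) * Δ < (1 - q) * (degIn G v SB : ℝ) + min q (1 - q) * (degIn G v SAB : ℝ) ∧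
    (1 - q) * Δ < (degIn G v SB : ℝ) + q * (degIn G v SAB : ℝ)

/-- The two strategies of the `A`-`B` coordination game. -/
inductive CStrat
  | A | B
deriving DecidableEq

/-- Pairwise payoff in the `A`-`B` coordination game `(G, q)`. -/
noncomputable def cPairPayoff (q : ℝ) : CStrat → CStrat → ℝ
  | .A, .A => 1 - q
  | .A, .B => 0
  | .B, .A => 0
  | .B, .B => q

/-- Total payoff to `v` for playing `s` against profile `σ` in the coordination game. -/
noncomputable def cTotalPayoff (G : SimpleGraph V) (q : ℝ) (σ : V → CStrat)
    (v : V) (s : CStrat) : ℝ :=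
  ∑ᶠ u ∈ G.neighborSet v, cPairPayoff q s (σ u)

/-- `s` is a best response of `v` to `σ` in the coordination game. -/
def CIsBestResponse (G : SimpleGraph V) (q : ℝ) (σ : V → CStrat) (v : V) (s : CStrat) : Prop :=
  ∀ s' : CStrat, cTotalPayoff G q σ v s' ≤ cTotalPayoff G q σ v s

/-- Strategy `A` becomes epidemic in the coordination game `(G, q)` starting from the
initial set `S₀`. -/
def CoordEpidemicFrom (G : SimpleGraph V) (q : ℝ) (S₀ : Set V) : Prop :=
  ∃ (α : ℕ → V) (σ : ℕ → V → CStrat),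
    Function.Surjective α ∧
    (∀ v ∈ S₀, σ 0 v = CStrat.A) ∧
    (∀ v ∉ S₀, σ 0 v = CStrat.B) ∧
    (∀ n, CIsBestResponse G q (σ n) (α n) (σ (n + 1) (α n))) ∧
    (∀ n v, v ≠ α n → σ (n + 1) v = σ n v) ∧
    (∀ v, ∃ n, σ n v = CStrat.A)

/-- Strategy `A` becomes epidemic in the coordination game `(G, q)`. -/
def CoordEpidemic (G : SimpleGraph V) (q : ℝ) : Prop :=
  ∃ S₀ : Set V, S₀.Finite ∧ CoordEpidemicFrom G q S₀


end Contagion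

/-!
Root the tree at any vertex `w₀`. Every other vertex has one parent, one level closer to `w₀`, and
`Δ - 1` children, one level further out, so its best responses depend only on the strategy `t` of
its parent and the common strategy `c` of its children (`IsSplitBestResponse`).

If `(Δ - 1) q ≤ Δ r` and `Δ q ≤ 1`, then `A` is a best response to `(t, c) = (A, B)`, so `A`
spreads level by level from the ball of radius one around `w₀`. If `2 q + Δ r ≤ 1` and
`Δ r ≤ (Δ - 1) q`, then `AB` is a best response to `(A, B)` and `(AB, B)`, and `A` one to
`(A, AB)`: starting from `{w₀}`, a front of `AB` moves outwards level by level and each vertex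
turns to `A` as soon as all its children play `AB`. These two cases cover `treeRegion Δ`.

Outside `treeRegion Δ`, `A` is never a best response against children playing `B`, and `B` is
the only one unless the parent plays `A` too. Hence, beyond a ball containing the initial set, no
vertex ever plays `A`.
-/

section Enumeration

variable {V : Type*}

lemma exists_injective_nat_of_finite_sublevels (f : V → ℕ) (hf : ∀ k, {v | f v ≤ k}.Finite) :
    ∃ key : V → ℕ, Function.Injective key ∧ ∀ u v, f u < f v → key u < key v := by
  have hcover : (⋃ k, {v | f v ≤ k}) = Set.univ :=
    Set.eq_univ_of_forall fun v => Set.mem_iUnion.2 ⟨f v, (le_rfl : f v ≤ f v)⟩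
  have : Countable V :=
    Set.countable_univ_iff.mp (hcover ▸ Set.countable_iUnion fun k => (hf k).countable)
  obtain ⟨g, hg⟩ := exists_injective_nat V
  let M : ℕ → ℕ := fun k => (hf k).toFinset.sup g + k
  have hM : StrictMono M := fun k l hkl =>
    Nat.add_lt_add_of_le_of_lt (Finset.sup_mono fun v hv => by
      simp only [Set.Finite.mem_toFinset, Set.mem_ofPred_eq] at hv ⊢; omega) hkl
  have hgM : ∀ v, g v ≤ M (f v) := fun v =>
    (Finset.le_sup (f := g) (by simp)).trans (Nat.le_add_right _ _)
  -- `Nat.pair m n` with `n ≤ m` lies in `[m ^ 2, (m + 1) ^ 2)`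
  refine ⟨fun v => Nat.pair (M (f v)) (g v), fun u v h => hg (Nat.pair_eq_pair.mp h).2,
    fun u v h => ?_⟩
  calc Nat.pair (M (f u)) (g u) < (max (M (f u)) (g u) + 1) ^ 2 := Nat.pair_lt_max_add_one_sq _ _
    _ = (M (f u) + 1) ^ 2 := by rw [max_eq_left (hgM u)]
    _ ≤ M (f v) ^ 2 := Nat.pow_le_pow_left (hM h) 2
    _ = max (M (f v)) (g v) ^ 2 := by rw [max_eq_left (hgM v)]
    _ ≤ Nat.pair (M (f v)) (g v) := (Nat.le_add_right _ _).trans (Nat.max_sq_add_min_le_pair _ _)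

lemma exists_equiv_nat_of_finite_sublevels [Infinite V] (f : V → ℕ)
    (hf : ∀ k, {v | f v ≤ k}.Finite) : ∃ e : V ≃ ℕ, ∀ u v, f u < f v → e u < e v := by
  classical
  obtain ⟨key, hkey, hmono⟩ := exists_injective_nat_of_finite_sublevels f hf
  have hinf : (Set.range key).Infinite := Set.infinite_range_of_injective hkey
  let p : ℕ → Prop := (· ∈ Set.range key)
  refine ⟨Equiv.ofBijective (fun v => Nat.count p (key v)) ⟨fun u v h => ?_, fun n => ?_⟩,
    fun u v h => Nat.count_strict_mono ⟨u, rfl⟩ (hmono u v h)⟩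
  · exact hkey (Nat.count_injective ⟨u, rfl⟩ ⟨v, rfl⟩ h)
  · obtain ⟨v, hv⟩ := Nat.nth_mem_of_infinite hinf n
    exact ⟨v, (congrArg (Nat.count p) hv).trans (Nat.count_nth_of_infinite hinf n)⟩

end Enumeration

namespace SimpleGraph

variable {V : Type*} {G : SimpleGraph V} {u : V}

lemma Connected.exists_adj_dist_add_one_eq (hG : G.Connected) {v : V} (hv : v ≠ u) :
    ∃ p, G.Adj v p ∧ G.dist u p + 1 = G.dist u v := by
  obtain ⟨Q, hQ⟩ := hG.exists_walk_length_eq_dist v u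
  cases Q with
  | nil => exact absurd rfl hv
  | cons h Q =>
    refine ⟨_, h, le_antisymm ?_ ?_⟩
    · rw [dist_comm, dist_comm (u := u), ← hQ, Walk.length_cons]
      exact Nat.add_le_add_right (dist_le Q) 1
    · simpa [dist_eq_one_iff_adj.mpr h.symm] using h.symm.reachable.dist_triangle_right u

lemma IsTree.eq_of_adj_of_dist_add_one_eq (hG : G.IsTree) {v p p' : V} (hp : G.Adj v p)
    (hp' : G.Adj v p') (h : G.dist u p + 1 = G.dist u v) (h' : G.dist u p' + 1 = G.dist u v) :
    p = p' := by
  obtain ⟨P, hP⟩ := hG.connected.exists_walk_length_eq_dist u p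
  obtain ⟨P', hP'⟩ := hG.connected.exists_walk_length_eq_dist u p'
  have hQ : (P.concat hp.symm).IsPath :=
    (P.concat hp.symm).isPath_of_length_eq_dist (by rw [Walk.length_concat, hP, h])
  have hQ' : (P'.concat hp'.symm).IsPath :=
    (P'.concat hp'.symm).isPath_of_length_eq_dist (by rw [Walk.length_concat, hP', h'])
  exact (Walk.concat_inj (congrArg Subtype.val
    ((hG.isAcyclic.subsingleton_path u v).elim ⟨_, hQ⟩ ⟨_, hQ'⟩))).1

lemma IsTree.exists_parent (hG : G.IsTree) {v : V} (hv : v ≠ u) :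
    ∃ p, G.Adj v p ∧ G.dist u p + 1 = G.dist u v ∧
      ∀ w, G.Adj v w → w ≠ p → G.dist u w = G.dist u v + 1 := by
  obtain ⟨p, hp, hpv⟩ := hG.connected.exists_adj_dist_add_one_eq hv
  refine ⟨p, hp, hpv, fun w hw hwp => ?_⟩
  refine (hG.dist_eq_dist_add_one_of_adj u hw).resolve_left fun h => hwp ?_
  exact hG.eq_of_adj_of_dist_add_one_eq hw hp h.symm hpv

lemma IsTree.exists_child (hG : G.IsTree) {v : V} (hv : 1 < (G.neighborSet v).ncard) :
    ∃ c, G.Adj v c ∧ G.dist u c = G.dist u v + 1 := by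
  by_cases hvu : v = u
  · subst hvu
    obtain ⟨c, hc, -⟩ := Set.exists_ne_of_one_lt_ncard hv v
    exact ⟨c, hc, by simpa using dist_eq_one_iff_adj.mpr hc⟩
  · obtain ⟨p, -, -, hchild⟩ := hG.exists_parent hvu
    obtain ⟨c, hc, hcp⟩ := Set.exists_ne_of_one_lt_ncard hv p
    exact ⟨c, hc, hchild c hc hcp⟩

lemma Connected.finite_setOf_dist_le (hG : G.Connected) (hfin : ∀ v, (G.neighborSet v).Finite)
    (u : V) (R : ℕ) : {v | G.dist u v ≤ R}.Finite := by
  induction R with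
  | zero =>
    refine (Set.finite_singleton u).subset fun v hv => ?_
    exact (hG.dist_eq_zero_iff.mp (Nat.le_zero.mp hv)).symm
  | succ R ih =>
    refine (ih.union (ih.biUnion fun p _ => hfin p)).subset fun v hv => ?_
    by_cases hvR : G.dist u v ≤ R
    · exact Or.inl hvR
    · have hvu : v ≠ u := by rintro rfl; simp at hvR
      obtain ⟨p, hp, hpv⟩ := hG.exists_adj_dist_add_one_eq hvu
      have hpR : G.dist u p ≤ R := by simp only [Set.mem_ofPred_eq] at hv; omega
      exact Or.inr (Set.mem_biUnion hpR hp.symm)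

lemma Connected.exists_lt_dist [Infinite V] (hG : G.Connected)
    (hfin : ∀ v, (G.neighborSet v).Finite) (u : V) (R : ℕ) : ∃ v, R < G.dist u v := by
  by_contra! h
  exact Set.infinite_univ ((hG.finite_setOf_dist_le hfin u R).subset fun v _ => h v)

end SimpleGraph

namespace Contagion

variable {V : Type*}

/-- Payoff of `s` at a vertex of degree `D` one of whose neighbours plays `t` while the other
`D - 1` play `c`. -/
noncomputable def splitPayoff (q r D : ℝ) (s t c : Strat) : ℝ :=
  pairPayoff q r s t + (D - 1) * pairPayoff q r s c

def IsSplitBestResponse (q r D : ℝ) (t c s : Strat) : Prop :=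
  ∀ s', splitPayoff q r D s' t c ≤ splitPayoff q r D s t c

section Payoff

variable {G : SimpleGraph V} {Δ : ℕ} {q r : ℝ} {σ : V → Strat}

lemma IsRegular.finite_neighborSet (hReg : IsRegular G Δ) (hΔ : Δ ≠ 0) (v : V) :
    (G.neighborSet v).Finite :=
  Set.finite_of_ncard_ne_zero (hReg v ▸ hΔ)

lemma totalPayoff_eq_splitPayoff (hReg : IsRegular G Δ) (hΔ : Δ ≠ 0) {v p : V} (hp : G.Adj v p)
    {c : Strat} (hc : ∀ w, G.Adj v w → w ≠ p → σ w = c) (s : Strat) :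
    totalPayoff G q r σ v s = splitPayoff q r Δ s (σ p) c := by
  classical
  have hfin := hReg.finite_neighborSet hΔ v
  have hp' : p ∈ hfin.toFinset := hfin.mem_toFinset.2 hp
  have hrest : ∑ w ∈ hfin.toFinset.erase p, pairPayoff q r s (σ w)
      = ∑ _ ∈ hfin.toFinset.erase p, pairPayoff q r s c :=
    Finset.sum_congr rfl fun w hw => by
      rw [hc w (hfin.mem_toFinset.1 (Finset.mem_of_mem_erase hw)) (Finset.ne_of_mem_erase hw)]
  rw [totalPayoff, finsum_mem_eq_finite_toFinset_sum _ hfin, ← Finset.add_sum_erase _ _ hp',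
    hrest, Finset.sum_const, Finset.card_erase_of_mem hp', ← Set.ncard_eq_toFinset_card _ hfin,
    hReg v, nsmul_eq_mul, Nat.cast_pred (Nat.pos_of_ne_zero hΔ), splitPayoff]

lemma isBestResponse_iff_of_adj (hReg : IsRegular G Δ) (hΔ : Δ ≠ 0) {v p : V} (hp : G.Adj v p)
    {c : Strat} (hc : ∀ w, G.Adj v w → w ≠ p → σ w = c) (s : Strat) :
    IsBestResponse G q r σ v s ↔ IsSplitBestResponse q r Δ (σ p) c s := by
  simp only [IsBestResponse, IsSplitBestResponse, totalPayoff_eq_splitPayoff hReg hΔ hp hc]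

lemma isBestResponse_of_forall_adj (hReg : IsRegular G Δ) (hΔ : Δ ≠ 0) {v : V} {c : Strat}
    (hc : ∀ w, G.Adj v w → σ w = c) {s : Strat} (hs : IsSplitBestResponse q r Δ c c s) :
    IsBestResponse G q r σ v s := by
  obtain ⟨p, hp⟩ := Set.nonempty_of_ncard_ne_zero (hReg v ▸ hΔ)
  rw [isBestResponse_iff_of_adj hReg hΔ hp fun w hw _ => hc w hw, hc p hp]
  exact hs

end Payoff

section Numeric

variable {q r D : ℝ}

lemma isSplitBestResponse_A_A_A (hq1 : q ≤ 1) (hr : 0 ≤ r) (hD : 0 ≤ D) :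
    IsSplitBestResponse q r D .A .A .A := by
  intro s
  cases s <;> simp only [splitPayoff, pairPayoff] <;> nlinarith

lemma isSplitBestResponse_A_B_A (hq : D * q ≤ 1) (hqr : (D - 1) * q ≤ D * r) :
    IsSplitBestResponse q r D .A .B .A := by
  intro s
  cases s <;> simp only [splitPayoff, pairPayoff] <;> nlinarith

lemma isSplitBestResponse_AB_B_AB (hr : 0 ≤ r) (hD : 0 ≤ D)
    (hqr : 2 * q + D * r ≤ 1) (hrq : D * r ≤ (D - 1) * q) {t : Strat} (ht : t ≠ .B) :
    IsSplitBestResponse q r D t .B .AB := by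
  intro s
  cases t
  · cases s <;> simp only [splitPayoff, pairPayoff] <;> nlinarith
  · exact absurd rfl ht
  · have hq : q ≤ 1 - q := by nlinarith
    cases s <;> simp only [splitPayoff, pairPayoff, max_eq_right hq] <;> nlinarith

lemma isSplitBestResponse_A_AB_A (hr : 0 ≤ r) (hD : 1 ≤ D) (hqr : 2 * q + D * r ≤ 1) :
    IsSplitBestResponse q r D .A .AB .A := by
  have hq : q ≤ 1 - q := by nlinarith
  intro s
  cases s <;> simp only [splitPayoff, pairPayoff, max_eq_right hq] <;> nlinarith

lemma isSplitBestResponse_AB_AB_A (hr : 0 ≤ r) (hD : 0 ≤ D) (hqr : 2 * q + D * r ≤ 1) :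
    IsSplitBestResponse q r D .AB .AB .A := by
  have hq : q ≤ 1 - q := by nlinarith
  intro s
  cases s <;> simp only [splitPayoff, pairPayoff, max_eq_right hq] <;> nlinarith
lemma not_isSplitBestResponse_B_A (hq0 : 0 < q) (hrq : (D - 1) * q ≤ D * r → 1 < D * q)
    (t : Strat) : ¬ IsSplitBestResponse q r D t .B .A := by
  intro h
  by_cases hc : (D - 1) * q ≤ D * r
  · have := hrq hc
    have := h .B
    cases t <;> simp only [splitPayoff, pairPayoff] at this <;> nlinarith
  · have := h .AB
    rcases le_total q (1 - q) with hm | hm <;> cases t <;>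
      simp only [splitPayoff, pairPayoff, max_eq_right hm, max_eq_left hm] at this <;> nlinarith

lemma eq_B_of_isSplitBestResponse_B (hr : 0 < r) (hD : 0 < D) (hqr : 1 < 2 * q + D * r)
    (hrq : (D - 1) * q ≤ D * r → 1 < D * q) {t s : Strat} (ht : t ≠ .A)
    (h : IsSplitBestResponse q r D t .B s) : s = .B := by
  have hDq : 1 < (D + 1) * q := by
    by_cases hc : (D - 1) * q ≤ D * r
    · nlinarith [hrq hc]
    · nlinarith
  have := h .B
  cases t
  · exact absurd rfl ht
  all_goals rcases le_total q (1 - q) with hm | hm <;> cases s <;>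
    simp only [splitPayoff, pairPayoff, max_eq_right hm, max_eq_left hm] at this ⊢ <;> nlinarith

end Numeric

section AdoptionProfile

variable {S₀ : Set V} {tAB tA : V → ℕ} {n : ℕ} {v : V}

open Classical in
noncomputable def adoptionProfile (S₀ : Set V) (tAB tA : V → ℕ) (n : ℕ) (v : V) : Strat :=
  if v ∈ S₀ ∨ tA v < n then .A else if tAB v < n then .AB else .B

lemma adoptionProfile_of_mem (hv : v ∈ S₀) : adoptionProfile S₀ tAB tA n v = .A :=
  if_pos (Or.inl hv)

lemma adoptionProfile_of_lt (h : tA v < n) : adoptionProfile S₀ tAB tA n v = .A :=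
  if_pos (Or.inr h)

lemma adoptionProfile_eq_AB (hv : v ∉ S₀) (h₁ : tAB v < n) (h₂ : n ≤ tA v) :
    adoptionProfile S₀ tAB tA n v = .AB := by
  rw [adoptionProfile, if_neg (not_or.2 ⟨hv, by omega⟩), if_pos h₁]

lemma adoptionProfile_eq_B (hv : v ∉ S₀) (h₁ : n ≤ tAB v) (h₂ : n ≤ tA v) :
    adoptionProfile S₀ tAB tA n v = .B := by
  rw [adoptionProfile, if_neg (not_or.2 ⟨hv, by omega⟩), if_neg (by omega)]

lemma adoptionProfile_ne_B (h : tAB v < n) : adoptionProfile S₀ tAB tA n v ≠ .B := by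
  unfold adoptionProfile
  split_ifs <;> simp

lemma epidemic_of_adoptionProfile {G : SimpleGraph V} {q r : ℝ} (hS₀ : S₀.Finite) {α : ℕ → V}
    (htA : ∀ v, α (tA v) = v) (htAB : ∀ v ∉ S₀, α (tAB v) = v)
    (hbr : ∀ n, IsBestResponse G q r (adoptionProfile S₀ tAB tA n) (α n)
      (adoptionProfile S₀ tAB tA (n + 1) (α n))) :
    Epidemic G q r := by
  refine ⟨S₀, α, adoptionProfile S₀ tAB tA, hS₀, fun v => ⟨tA v, htA v⟩,
    fun v hv => adoptionProfile_of_mem hv, fun v hv => adoptionProfile_eq_B hv (Nat.zero_le _)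
    (Nat.zero_le _), hbr, fun n v hv => ?_, fun v => ⟨tA v + 1, adoptionProfile_of_lt (by omega)⟩⟩
  by_cases hS : v ∈ S₀
  · rw [adoptionProfile_of_mem hS, adoptionProfile_of_mem hS]
  · have hA : tA v ≠ n := fun h => hv (h ▸ (htA v).symm)
    have hAB : tAB v ≠ n := fun h => hv (h ▸ (htAB v hS).symm)
    have e₁ : tA v < n + 1 ↔ tA v < n := by omega
    have e₂ : tAB v < n + 1 ↔ tAB v < n := by omega
    simp only [adoptionProfile, hS, false_or, e₁, e₂]

end AdoptionProfile

theorem epidemic_of_isSplitBestResponse_A {W : Type*} [Infinite W] {T : SimpleGraph W} {Δ : ℕ}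
    {q r : ℝ} (hT : T.IsTree) (hΔ : Δ ≠ 0) (hReg : IsRegular T Δ)
    (hAA : IsSplitBestResponse q r Δ .A .A .A) (hAB : IsSplitBestResponse q r Δ .A .B .A) :
    Epidemic T q r := by
  obtain ⟨w₀⟩ := (inferInstance : Nonempty W)
  have hfin := hReg.finite_neighborSet hΔ
  obtain ⟨e, he⟩ := exists_equiv_nat_of_finite_sublevels (T.dist w₀)
    (hT.connected.finite_setOf_dist_le hfin w₀)
  refine epidemic_of_adoptionProfile (S₀ := {v | T.dist w₀ v ≤ 1}) (tAB := e) (tA := e)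
    (hT.connected.finite_setOf_dist_le hfin w₀ 1) e.symm_apply_apply
    (fun v _ => e.symm_apply_apply v) fun n => ?_
  set v := e.symm n
  have hvn : e v = n := e.apply_symm_apply n
  rw [adoptionProfile_of_lt (by omega)]
  by_cases hv : v = w₀
  · refine isBestResponse_of_forall_adj hReg hΔ (fun w hw => adoptionProfile_of_mem ?_) hAA
    simp [hv ▸ SimpleGraph.dist_eq_one_iff_adj.mpr hw]
  obtain ⟨p, hp, hpv, hchild⟩ := hT.exists_parent hv
  have hpA : adoptionProfile {v | T.dist w₀ v ≤ 1} e e n p = .A :=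
    adoptionProfile_of_lt (hvn ▸ he p v (by omega))
  rw [isBestResponse_iff_of_adj hReg hΔ hp (c := .B) fun w hw hwp => ?_, hpA]
  · exact hAB
  have hw := hchild w hw hwp
  have hv₁ : T.dist w₀ v ≠ 0 := fun h => hv (hT.connected.dist_eq_zero_iff.mp h).symm
  have := he v w (by omega)
  exact adoptionProfile_eq_B (by simp only [Set.mem_ofPred_eq]; omega) (by omega) (by omega)

section LevelOrder

variable {W : Type*} {T : SimpleGraph W} {w₀ : W}

structure LevelOrder (T : SimpleGraph W) (w₀ : W) where
  idx : W ≃ ℕ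
  idx_lt_idx : ∀ u v, T.dist w₀ u < T.dist w₀ v → idx u < idx v
  last : W → W
  adj_last : ∀ v, T.Adj v (last v)
  dist_last : ∀ v, T.dist w₀ (last v) = T.dist w₀ v + 1
  idx_le_idx_last : ∀ v w, T.Adj v w → T.dist w₀ w = T.dist w₀ v + 1 → idx w ≤ idx (last v)

lemma LevelOrder.nonempty [Infinite W] (hT : T.IsTree) {Δ : ℕ} (hΔ : 2 ≤ Δ)
    (hReg : IsRegular T Δ) (w₀ : W) : Nonempty (LevelOrder T w₀) := by
  have hfin := hReg.finite_neighborSet (by omega)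
  obtain ⟨e, he⟩ := exists_equiv_nat_of_finite_sublevels (T.dist w₀)
    (hT.connected.finite_setOf_dist_le hfin w₀)
  have hlast (v : W) := Set.exists_max_image {w | T.Adj v w ∧ T.dist w₀ w = T.dist w₀ v + 1} e
    ((hfin v).subset fun w hw => hw.1) (hT.exists_child (by rw [hReg v]; omega))
  choose last hlast hmax using hlast
  exact ⟨e, he, last, fun v => (hlast v).1, fun v => (hlast v).2,
    fun v w h₁ h₂ => hmax v w ⟨h₁, h₂⟩⟩

namespace LevelOrder

variable (O : LevelOrder T w₀) {Δ : ℕ} {q r : ℝ}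

lemma idx_root (hT : T.IsTree) : O.idx w₀ = 0 := by
  by_contra h
  have hv : O.idx.symm 0 ≠ w₀ := fun hv => h (O.idx.symm_apply_eq.mp hv).symm
  have := O.idx_lt_idx w₀ (O.idx.symm 0) (by
    rw [SimpleGraph.dist_self]
    exact Nat.pos_of_ne_zero fun h => hv (hT.connected.dist_eq_zero_iff.mp h).symm)
  simp at this

lemma idx_pos (hT : T.IsTree) {v : W} (hv : v ≠ w₀) : 0 < O.idx v :=
  Nat.pos_of_ne_zero fun h => hv (O.idx.injective (h.trans (O.idx_root hT).symm))

lemma idx_lt_idx_last (v : W) : O.idx v < O.idx (O.last v) :=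
  O.idx_lt_idx _ _ (by rw [O.dist_last]; omega)

lemma idx_last_lt_idx_last {v w : W} (h : T.dist w₀ v < T.dist w₀ w) :
    O.idx (O.last v) < O.idx (O.last w) :=
  O.idx_lt_idx _ _ (by rw [O.dist_last, O.dist_last]; omega)

lemma last_injective (hT : T.IsTree) : Function.Injective O.last := fun v w h =>
  hT.eq_of_adj_of_dist_add_one_eq (O.adj_last v).symm (h ▸ (O.adj_last w).symm)
    (O.dist_last v).symm (h ▸ (O.dist_last w).symm)

def abTime (v : W) : ℕ := 2 * O.idx v - 2

def aTime (v : W) : ℕ := O.abTime (O.last v) + 1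

/- Step `2 k` moves the `AB` front to vertex `k + 1`; at step `2 k + 1` the vertex whose last
child is `k + 1` switches to `A`, and if there is none, vertex `k + 1` repeats its move. -/
open Classical in
noncomputable def schedule (n : ℕ) : W :=
  if h : n % 2 = 1 ∧ ∃ w, O.idx (O.last w) = n / 2 + 1 then h.2.choose
  else O.idx.symm (n / 2 + 1)

lemma schedule_aTime (hT : T.IsTree) (v : W) : O.schedule (O.aTime v) = v := by
  have hv := O.idx_lt_idx_last v
  have hn : O.aTime v / 2 + 1 = O.idx (O.last v) := by unfold aTime abTime; omega
  have h : O.aTime v % 2 = 1 ∧ ∃ w, O.idx (O.last w) = O.aTime v / 2 + 1 :=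
    ⟨by unfold aTime abTime; omega, v, hn.symm⟩
  rw [schedule, dif_pos h]
  exact O.last_injective hT (O.idx.injective (h.2.choose_spec.trans hn))

lemma schedule_abTime (hT : T.IsTree) {v : W} (hv : v ≠ w₀) : O.schedule (O.abTime v) = v := by
  have h0 := O.idx_pos hT hv
  rw [schedule, dif_neg (by unfold abTime; omega), show O.abTime v / 2 + 1 = O.idx v by
    unfold abTime; omega, Equiv.symm_apply_apply]

lemma isBestResponse_AB (hT : T.IsTree) (hΔ : Δ ≠ 0) (hReg : IsRegular T Δ)
    (hAB : ∀ t ≠ .B, IsSplitBestResponse q r Δ t .B .AB) {v : W} (hv : v ≠ w₀) {n : ℕ}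
    (hn : n / 2 + 1 = O.idx v) :
    IsBestResponse T q r (adoptionProfile {w₀} O.abTime O.aTime n) v .AB := by
  obtain ⟨p, hp, hpv, hchild⟩ := hT.exists_parent hv
  rw [isBestResponse_iff_of_adj hReg hΔ hp (c := .B) fun w hw hwp => ?_]
  · refine hAB _ ?_
    by_cases hp₀ : p = w₀
    · simp [adoptionProfile_of_mem (show p ∈ {w₀} from hp₀)]
    · have := O.idx_lt_idx p v (by omega)
      have := O.idx_pos hT hp₀
      exact adoptionProfile_ne_B (by unfold abTime; omega)
  · have hw := hchild w hw hwp
    have := O.idx_lt_idx v w (by omega)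
    have := O.idx_lt_idx_last w
    refine adoptionProfile_eq_B ?_ (by unfold abTime; omega) (by unfold aTime abTime; omega)
    rintro rfl
    simp at hw

lemma isBestResponse_A (hT : T.IsTree) (hΔ : Δ ≠ 0) (hReg : IsRegular T Δ)
    (hA : IsSplitBestResponse q r Δ .A .AB .A) (hroot : IsSplitBestResponse q r Δ .AB .AB .A)
    (v : W) : IsBestResponse T q r (adoptionProfile {w₀} O.abTime O.aTime (O.aTime v)) v .A := by
  have hchild (w : W) (hw : T.Adj v w) (hwv : T.dist w₀ w = T.dist w₀ v + 1) :
      adoptionProfile {w₀} O.abTime O.aTime (O.aTime v) w = .AB := by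
    have hw₀ : w ≠ w₀ := by rintro rfl; simp at hwv
    have := O.idx_le_idx_last v w hw hwv
    have := O.idx_last_lt_idx_last (v := v) (w := w) (by omega)
    have := O.idx_pos hT hw₀
    exact adoptionProfile_eq_AB hw₀ (by unfold aTime abTime; omega) (by unfold aTime abTime; omega)
  by_cases hv : v = w₀
  · subst hv
    refine isBestResponse_of_forall_adj hReg hΔ (fun w hw => hchild w hw ?_) hroot
    simpa using SimpleGraph.dist_eq_one_iff_adj.mpr hw
  obtain ⟨p, hp, hpv, hchild'⟩ := hT.exists_parent hv
  rw [isBestResponse_iff_of_adj hReg hΔ hp fun w hw hwp => hchild w hw (hchild' w hw hwp)]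
  by_cases hp₀ : p = w₀
  · rwa [adoptionProfile_of_mem (show p ∈ {w₀} from hp₀)]
  · have := O.idx_last_lt_idx_last (v := p) (w := v) (by omega)
    have := O.idx_lt_idx_last p
    rwa [adoptionProfile_of_lt (by unfold aTime abTime; omega)]

end LevelOrder

end LevelOrder

theorem epidemic_of_isSplitBestResponse_AB {W : Type*} [Infinite W] {T : SimpleGraph W}
    {Δ : ℕ} {q r : ℝ} (hT : T.IsTree) (hΔ : 2 ≤ Δ) (hReg : IsRegular T Δ)
    (hAB : ∀ t ≠ .B, IsSplitBestResponse q r Δ t .B .AB)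
    (hA : IsSplitBestResponse q r Δ .A .AB .A) (hroot : IsSplitBestResponse q r Δ .AB .AB .A) :
    Epidemic T q r := by
  obtain ⟨w₀⟩ := (inferInstance : Nonempty W)
  obtain ⟨O⟩ := LevelOrder.nonempty hT hΔ hReg w₀
  refine epidemic_of_adoptionProfile (tAB := O.abTime) (tA := O.aTime)
    (Set.finite_singleton w₀) (O.schedule_aTime hT)
    (fun v hv => O.schedule_abTime hT hv) fun n => ?_
  rw [LevelOrder.schedule]
  split_ifs with h
  · obtain ⟨hodd, hex⟩ := h
    have hw : O.aTime hex.choose = n := by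
      have := hex.choose_spec
      unfold LevelOrder.aTime LevelOrder.abTime
      omega
    rw [adoptionProfile_of_lt (by omega)]
    simpa only [hw] using O.isBestResponse_A hT (by omega) hReg hA hroot hex.choose
  · set v := O.idx.symm (n / 2 + 1)
    have hv : O.idx v = n / 2 + 1 := O.idx.apply_symm_apply _
    have hv₀ : v ≠ w₀ := fun h => by rw [h, O.idx_root hT] at hv; omega
    have := O.idx_lt_idx_last v
    rw [adoptionProfile_eq_AB (S₀ := {w₀}) hv₀ (by unfold LevelOrder.abTime; omega)
      (by unfold LevelOrder.aTime LevelOrder.abTime; omega)]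
    exact O.isBestResponse_AB hT (by omega) hReg hAB hv₀ hv.symm

theorem not_epidemic_of_not_isSplitBestResponse {W : Type*} [Infinite W] {T : SimpleGraph W}
    {Δ : ℕ} {q r : ℝ} (hT : T.IsTree) (hΔ : Δ ≠ 0) (hReg : IsRegular T Δ)
    (hA : ∀ t, ¬ IsSplitBestResponse q r Δ t .B .A)
    (hB : ∀ t ≠ .A, ∀ s, IsSplitBestResponse q r Δ t .B s → s = .B) :
    ¬ Epidemic T q r := by
  rintro ⟨S₀, α, σ, hS₀, -, -, hinit, hbr, hfix, hall⟩
  obtain ⟨w₀⟩ := (inferInstance : Nonempty W)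
  obtain ⟨R, hR⟩ := (hS₀.image (T.dist w₀)).bddAbove
  have hinv (n : ℕ) :
      ∀ v, R < T.dist w₀ v → σ n v ≠ .A ∧ (R + 1 < T.dist w₀ v → σ n v = .B) := by
    induction n with
    | zero =>
      intro v hv
      rw [hinit v fun h => absurd (hR ⟨v, h, rfl⟩) (by omega)]
      simp
    | succ n ih =>
      intro v hv
      by_cases hvn : v = α n
      · subst hvn
        have hv₀ : α n ≠ w₀ := by rintro h; simp [h] at hv
        obtain ⟨p, hp, hpv, hchild⟩ := hT.exists_parent hv₀
        have hbr' : IsSplitBestResponse q r Δ (σ n p) .B (σ (n + 1) (α n)) := by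
          refine (isBestResponse_iff_of_adj hReg hΔ hp (fun w hw hwp => ?_) _).1 (hbr n)
          have := hchild w hw hwp
          exact (ih w (by omega)).2 (by omega)
        exact ⟨fun h => hA _ (h ▸ hbr'), fun hv' => hB _ (ih p (by omega)).1 _ hbr'⟩
      · rw [hfix n v hvn]
        exact ih v hv
  obtain ⟨v, hv⟩ := hT.connected.exists_lt_dist (hReg.finite_neighborSet hΔ) w₀ R
  obtain ⟨n, hn⟩ := hall v
  exact (hinv n v hv).1 hn

lemma mem_treeRegion_iff {Δ : ℕ} (hΔ : 0 < Δ) {q r : ℝ} :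
    (q, r) ∈ treeRegion Δ ↔
      0 < q ∧ 0 < r ∧ (((Δ - 1) * q ≤ Δ * r ∧ Δ * q ≤ 1) ∨ 2 * q + Δ * r ≤ 1) := by
  have hD : (0 : ℝ) < Δ := by exact_mod_cast hΔ
  simp only [treeRegion, Set.mem_union, Set.mem_ofPred_eq, div_mul_eq_mul_div, div_le_iff₀ hD,
    le_div_iff₀ hD, mul_comm r, mul_comm q]
  tauto

/-- The epidemic region of the infinite `Δ`-regular tree is exactly
`{(q,r) : q,r > 0, r ≥ ((Δ-1)/Δ)q, q ≤ 1/Δ} ∪ {(q,r) : q,r > 0, 2q + Δr ≤ 1}`. -/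
theorem tree_epidemic_region_eq {W : Type*} (Δ : ℕ) (hΔ : 2 ≤ Δ) (T : SimpleGraph W)
    (hInf : Infinite W) (hConn : T.Connected) (hAcyc : T.IsAcyclic) (hReg : IsRegular T Δ) :
    epidemicRegion T = treeRegion Δ := by
  have hT : T.IsTree := ⟨hConn, hAcyc⟩
  have hD : (2 : ℝ) ≤ Δ := by exact_mod_cast hΔ
  ext ⟨q, r⟩
  rw [mem_treeRegion_iff (by omega)]
  constructor
  · rintro ⟨hq0, hq1, hr, hepi⟩
    refine ⟨hq0, hr, by_contra fun hout => ?_⟩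
    simp only [not_or, not_and, not_le] at hout
    exact not_epidemic_of_not_isSplitBestResponse hT (by omega) hReg
      (not_isSplitBestResponse_B_A hq0 hout.1)
      (fun t ht s => eq_B_of_isSplitBestResponse_B hr (by positivity) hout.2 hout.1 ht) hepi
  rintro ⟨hq0, hr, h⟩
  have hq1 : q < 1 := by rcases h with ⟨-, h⟩ | h <;> nlinarith
  have region1 (hq : Δ * q ≤ 1) (hrq : (Δ - 1) * q ≤ Δ * r) : Epidemic T q r :=
    epidemic_of_isSplitBestResponse_A hT (by omega) hReg
      (isSplitBestResponse_A_A_A hq1.le hr.le (by positivity)) (isSplitBestResponse_A_B_A hq hrq)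
  refine ⟨hq0, hq1, hr, ?_⟩
  rcases h with ⟨hrq, hq⟩ | h
  · exact region1 hq hrq
  by_cases hrq : Δ * r ≤ (Δ - 1) * q
  · exact epidemic_of_isSplitBestResponse_AB hT hΔ hReg
      (fun t ht => isSplitBestResponse_AB_B_AB hr.le (by positivity) h hrq ht)
      (isSplitBestResponse_A_AB_A hr.le (by linarith) h)
      (isSplitBestResponse_AB_AB_A hr.le (by positivity) h)
  · exact region1 (by nlinarith) (by linarith)

end Contagion
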